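/- Let φ ∈ J_k(SL₂(ℤ)) be a modified Jacobi form of weight k ∈ ℤ and index 0 on SL₂(ℤ), and for a row vector X ∈ ℚ² set φ_X(τ) := (φ|''_k X)(τ, 0). If X, Y ∈ ℚ² satisfy X ≡ Y (mod ℤ²), then there exists a root of unity ξ such that φ_X(τ) = ξ·φ_Y(τ) for all τ ∈ ℍ. -/

import Mathlib

open Complex UpperHalfPlane Matrix Filter Topology

noncomputable section

abbrev SL2Z := Matrix.SpecialLinearGroup (Fin 2) ℤ

/-- The lattice ℤω₁ + ℤω₂ as a subset of ℂ. -/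
def lat (ω₁ ω₂ : ℂ) : Set ℂ := {w | ∃ m n : ℤ, w = m * ω₁ + n * ω₂}

/-- The Weierstrass σ-function of the lattice ℤω₁ + ℤω₂. -/
def wSigma (ω₁ ω₂ : ℂ) (z : ℂ) : ℂ :=
  z * ∏' w : {w : ℂ // w ∈ lat ω₁ ω₂ ∧ w ≠ 0},
      ((1 - z / (w : ℂ)) * Complex.exp (z / (w : ℂ) + (z / (w : ℂ)) ^ 2 / 2))

/-- The Weierstrass ζ-function of the lattice ℤω₁ + ℤω₂. -/
def wZeta (ω₁ ω₂ : ℂ) (z : ℂ) : ℂ :=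
  1 / z + ∑' w : {w : ℂ // w ∈ lat ω₁ ω₂ ∧ w ≠ 0},
      (1 / (z - (w : ℂ)) + 1 / (w : ℂ) + z / (w : ℂ) ^ 2)

/-- η(ω, L) := ζ(z+ω, L) − ζ(z, L) for ω ∈ L (independent of z);
evaluated here at the base point z = (ω₁+ω₂)/3, which is not a pole of ζ(·, L)
when ω₁, ω₂ are ℝ-linearly independent. -/
def wEtaP (ω₁ ω₂ : ℂ) (ω : ℂ) : ℂ :=
  wZeta ω₁ ω₂ ((ω₁ + ω₂) / 3 + ω) - wZeta ω₁ ω₂ ((ω₁ + ω₂) / 3)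

/-- The Weierstrass η-function, extended to ℂ by ℝ-linearity in the coordinates:
η(r₁ω₁ + r₂ω₂, L) := r₁η(ω₁, L) + r₂η(ω₂, L). -/
def wEta (ω₁ ω₂ : ℂ) (r₁ r₂ : ℝ) : ℂ :=
  (r₁ : ℂ) * wEtaP ω₁ ω₂ ω₁ + (r₂ : ℂ) * wEtaP ω₁ ω₂ ω₂

open scoped Classical in
/-- ψ(z, L) := −1 if z ∈ L ∖ 2L, and 1 otherwise. -/
def wPsi (ω₁ ω₂ : ℂ) (z : ℂ) : ℂ :=
  if z ∈ lat ω₁ ω₂ \ lat (2 * ω₁) (2 * ω₂) then -1 else 1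

/-- ψ(λ, μ) := ψ(λτ + μ, ℤτ + ℤ), independent of τ ∈ ℍ; here evaluated at τ = i. -/
def psiV (l μ : ℝ) : ℂ := wPsi Complex.I 1 ((l : ℂ) * Complex.I + (μ : ℂ))

/-- e(x) := exp(2πix). -/
def eFun (x : ℂ) : ℂ := Complex.exp (2 * Real.pi * Complex.I * x)

/-- The slash operator φ |'_k M = φ |_{k,0} M. -/
def slash1 (k : ℤ) (φ : ℍ → ℂ → ℂ) (M : SL2Z) : ℍ → ℂ → ℂ := fun τ z =>
  ((M 1 0 : ℂ) * (τ : ℂ) + (M 1 1 : ℂ)) ^ (-k) *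
    φ (M • τ) (z / ((M 1 0 : ℂ) * (τ : ℂ) + (M 1 1 : ℂ)))

/-- The slash operator φ |''_k X for a row vector X = (λ, μ) ∈ ℝ². -/
def slash2 (k : ℤ) (φ : ℍ → ℂ → ℂ) (X : Fin 2 → ℝ) : ℍ → ℂ → ℂ := fun τ z =>
  (psiV (X 0) (X 1) *
      Complex.exp (wEta (τ : ℂ) 1 (X 0) (X 1) *
        (z + ((X 0 : ℂ) * (τ : ℂ) + (X 1 : ℂ)) / 2))) ^ k *
    φ τ (z + (X 0 : ℂ) * (τ : ℂ) + (X 1 : ℂ))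

/-- ρ(τ, z) := exp(½·η(1, ℤτ+ℤ)·z² − πiz). -/
def rho (τ : ℍ) (z : ℂ) : ℂ :=
  Complex.exp (wEta (τ : ℂ) 1 0 1 * z ^ 2 / 2 - Real.pi * Complex.I * z)

/-- Right multiplication of a row vector X ∈ ℝ² by a matrix M ∈ SL₂(ℤ). -/
def vmul (X : Fin 2 → ℝ) (M : SL2Z) : Fin 2 → ℝ :=
  Matrix.vecMul X ((M : Matrix (Fin 2) (Fin 2) ℤ).map (fun a => (a : ℝ)))

/-- Joint holomorphy of a function φ : ℍ × ℂ → ℂ. -/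
def MJHolo (φ : ℍ → ℂ → ℂ) : Prop :=
  DifferentiableOn ℂ
    (fun p : ℂ × ℂ => if h : 0 < p.1.im then φ ⟨p.1, h⟩ p.2 else 0)
    {p : ℂ × ℂ | 0 < p.1.im}

/-- Condition (iii) for a modified Jacobi form: for each M ∈ SL₂(ℤ), the function
ρᵏ·(φ|'_k M) has a Fourier development ∑_{n≥0} ∑_{|r|≤r₀(n)} c(n,r)·qⁿ·ζʳ with
r₀ increasing and r₀(n)/n → 0. -/
def MJFourier (k : ℤ) (φ : ℍ → ℂ → ℂ) : Prop :=
  ∀ M : SL2Z, ∃ r₀ : ℕ → ℕ, Monotone r₀ ∧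
    Tendsto (fun n : ℕ => (r₀ n : ℝ) / (n : ℝ)) atTop (nhds 0) ∧
    ∃ c : ℕ → ℤ → ℂ, ∀ (τ : ℍ) (z : ℂ),
      HasSum
        (fun n : ℕ => ∑ r ∈ Finset.Icc (-(r₀ n : ℤ)) ((r₀ n : ℤ)),
          c n r * eFun (τ : ℂ) ^ n * eFun z ^ r)
        (rho τ z ^ k * slash1 k φ M τ z)

/-- A modified Jacobi form of weight k and index 0 on a subgroup Γ of SL₂(ℤ). -/
def IsModifiedJacobiForm (k : ℤ) (Γ : Subgroup SL2Z) (φ : ℍ → ℂ → ℂ) : Prop :=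
  MJHolo φ ∧
  (∀ M ∈ Γ, slash1 k φ M = φ) ∧
  (∀ X : Fin 2 → ℤ, slash2 k φ (fun i => (X i : ℝ)) = φ) ∧
  MJFourier k φ

/-- Holomorphy of a function ℍ → ℂ. -/
def HoloOnH (f : ℍ → ℂ) : Prop :=
  DifferentiableOn ℂ (fun w : ℂ => if h : 0 < w.im then f ⟨w, h⟩ else 0)
    {w : ℂ | 0 < w.im}

/-- Meromorphy at every cusp of a weight-k function f : ℍ → ℂ: for each M ∈ SL₂(ℤ),
the q-expansion of f|_k M has only finitely many negative terms, i.e. qᵐ·(f|_k M) is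
bounded near i∞ for some m ≥ 0. -/
def MeroAtCusps (k : ℤ) (f : ℍ → ℂ) : Prop :=
  ∀ M : SL2Z, ∃ m : ℕ,
    UpperHalfPlane.IsBoundedAtImInfty (fun τ : ℍ =>
      eFun (τ : ℂ) ^ m *
        (((M 1 0 : ℂ) * (τ : ℂ) + (M 1 1 : ℂ)) ^ (-k) * f (M • τ)))

open scoped Classical in
/-- The order of vanishing (as a natural number) of f at z. -/
def ordNat (f : ℂ → ℂ) (z : ℂ) : ℕ :=
  if h : AnalyticAt ℂ f z then (analyticOrderAt f z).toNat else 0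

/-- The Klein form 𝔨_{(λ,μ)}(τ). -/
def kleinForm (l μ : ℝ) (τ : ℍ) : ℂ :=
  psiV l μ * Complex.exp (-(wEta (τ : ℂ) 1 l μ * ((l : ℂ) * (τ : ℂ) + (μ : ℂ))) / 2) *
    wSigma (τ : ℂ) 1 ((l : ℂ) * (τ : ℂ) + (μ : ℂ))

namespace S17aux

def Om : Set ℂ := {w : ℂ | 0 < w.im}

lemma isOpen_Om : IsOpen Om := isOpen_lt continuous_const Complex.continuous_im

lemma preconnected_Om : IsPreconnected Om := (convex_halfSpace_im_gt 0).isPreconnected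

lemma psiV_cases (l μ : ℝ) : psiV l μ = 1 ∨ psiV l μ = -1 := by
  unfold psiV wPsi
  split
  · exact Or.inr rfl
  · exact Or.inl rfl

lemma psiV_ne_zero (l μ : ℝ) : psiV l μ ≠ 0 := by
  rcases psiV_cases l μ with h | h <;> rw [h] <;> norm_num

lemma real_lin_ne_zero {w : ℂ} (hw : w.im ≠ 0) {x y : ℝ} (h : x ≠ 0 ∨ y ≠ 0) :
    (x : ℂ) * w + (y : ℂ) ≠ 0 := by
  intro hc
  have him : x * w.im = 0 := by simpa using congrArg Complex.im hc
  have hx0 : x = 0 := by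
    rcases mul_eq_zero.1 him with h' | h'
    · exact h'
    · exact absurd h' hw
  have hy0 : y = 0 := by
    rw [hx0] at hc
    simpa using hc
  rcases h with h | h
  · exact h hx0
  · exact h hy0

lemma int_lin_ne_zero {w : ℂ} (hw : w.im ≠ 0) {p : ℤ × ℤ} (hp : p ≠ 0) :
    (p.1 : ℂ) * w + (p.2 : ℂ) ≠ 0 := by
  have h1 : ¬(p.1 = 0 ∧ p.2 = 0) := by
    intro hc; exact hp (Prod.ext hc.1 hc.2)
  have h2 : (p.1 : ℝ) ≠ 0 ∨ (p.2 : ℝ) ≠ 0 := by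
    rcases not_and_or.1 h1 with h | h
    · exact Or.inl (by exact_mod_cast h)
    · exact Or.inr (by exact_mod_cast h)
  have := real_lin_ne_zero hw h2
  simpa using this

lemma int_pair_inj {τ : ℂ} (hτ : τ.im ≠ 0) {m n m' n' : ℤ}
    (h : (m : ℂ) * τ + (n : ℂ) = (m' : ℂ) * τ + (n' : ℂ)) : m = m' ∧ n = n' := by
  have him : (m : ℝ) * τ.im = (m' : ℝ) * τ.im := by simpa using congrArg Complex.im h
  have hm : m = m' := by exact_mod_cast mul_right_cancel₀ hτ him
  refine ⟨hm, ?_⟩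
  rw [hm] at h
  have := add_left_cancel h
  exact_mod_cast this

def latEquiv (τ : ℂ) (hτ : τ.im ≠ 0) :
    {p : ℤ × ℤ // p ≠ 0} ≃ {w : ℂ // w ∈ lat τ 1 ∧ w ≠ 0} :=
  Equiv.ofBijective
    (fun p => ⟨(p.1.1 : ℂ) * τ + (p.1.2 : ℂ),
      ⟨⟨p.1.1, p.1.2, by ring⟩, int_lin_ne_zero hτ p.2⟩⟩)
    (by
      constructor
      · rintro ⟨p, hp⟩ ⟨q, hq⟩ hpq
        have h := int_pair_inj hτ (Subtype.mk_eq_mk.1 hpq)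
        exact Subtype.ext (Prod.ext h.1 h.2)
      · rintro ⟨w, ⟨⟨m, n, rfl⟩, hw0⟩⟩
        refine ⟨⟨(m, n), ?_⟩, ?_⟩
        · intro h0
          apply hw0
          have hm : m = 0 := by simpa using congrArg Prod.fst h0
          have hn : n = 0 := by simpa using congrArg Prod.snd h0
          simp [hm, hn]
        · exact Subtype.ext (by ring))

lemma wZeta_eq (τ : ℂ) (hτ : τ.im ≠ 0) (z : ℂ) :
    wZeta τ 1 z = 1 / z + ∑' p : {p : ℤ × ℤ // p ≠ 0},
      (1 / (z - ((p.1.1 : ℂ) * τ + (p.1.2 : ℂ))) + 1 / ((p.1.1 : ℂ) * τ + (p.1.2 : ℂ))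
        + z / ((p.1.1 : ℂ) * τ + (p.1.2 : ℂ)) ^ 2) := by
  unfold wZeta
  congr 1
  rw [← (latEquiv τ hτ).tsum_eq]
  exact tsum_congr fun p => rfl

end S17aux
namespace S17aux

lemma r_mul_max_le_real (z : ℍ) {c d : ℝ} (h : c ≠ 0 ∨ d ≠ 0) :
    EisensteinSeries.r z * max |c| |d| ≤ ‖(c : ℂ) * z + (d : ℂ)‖ := by
  set s := max |c| |d| with hs
  have hs0 : 0 < s := by
    rcases h with h | h
    · exact lt_max_of_lt_left (abs_pos.2 h)
    · exact lt_max_of_lt_right (abs_pos.2 h)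
  have key : EisensteinSeries.r z ≤ ‖((c / s : ℝ) : ℂ) * z + ((d / s : ℝ) : ℂ)‖ := by
    rcases max_choice |c| |d| with hm | hm
    · apply EisensteinSeries.auxbound1 z
      rw [div_pow, hs, hm, _root_.sq_abs, div_self]
      · exact pow_ne_zero 2 (fun hc => by rw [hs, hm, hc] at hs0; norm_num at hs0)
    · apply EisensteinSeries.auxbound2 z
      rw [div_pow, hs, hm, _root_.sq_abs, div_self]
      · exact pow_ne_zero 2 (fun hc => by rw [hs, hm, hc] at hs0; norm_num at hs0)
  have heq : ((c / s : ℝ) : ℂ) * z + ((d / s : ℝ) : ℂ) = ((c : ℂ) * z + (d : ℂ)) / (s : ℂ) := by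
    push_cast
    field_simp
  have habs : ‖((c / s : ℝ) : ℂ) * z + ((d / s : ℝ) : ℂ)‖
      = ‖(c : ℂ) * z + (d : ℂ)‖ / s := by
    rw [heq, norm_div, Complex.norm_real, Real.norm_eq_abs, abs_of_pos hs0]
  rw [habs] at key
  calc EisensteinSeries.r z * s ≤ (‖(c : ℂ) * z + (d : ℂ)‖ / s) * s :=
        mul_le_mul_of_nonneg_right key hs0.le
    _ = ‖(c : ℂ) * z + (d : ℂ)‖ := div_mul_cancel₀ _ hs0.ne'

lemma summable_u :
    Summable (fun p : {p : ℤ × ℤ // p ≠ 0} => ‖(![p.1.1, p.1.2] : Fin 2 → ℤ)‖ ^ (-3 : ℝ)) := by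
  have h1 : Summable fun x : Fin 2 → ℤ => ‖x‖ ^ (-3 : ℝ) :=
    EisensteinSeries.summable_one_div_norm_rpow (by norm_num)
  have hinj : Function.Injective (fun q : ℤ × ℤ => (![q.1, q.2] : Fin 2 → ℤ)) := by
    intro a b hab
    have h0 := congrFun hab 0
    have h1 := congrFun hab 1
    simp at h0 h1
    exact Prod.ext h0 h1
  have h2 : Summable fun q : ℤ × ℤ => ‖(![q.1, q.2] : Fin 2 → ℤ)‖ ^ (-3 : ℝ) :=
    h1.comp_injective hinj
  exact h2.subtype _

lemma norm_pair (m n : ℤ) : ‖(![m, n] : Fin 2 → ℤ)‖ = max |(m : ℝ)| |(n : ℝ)| := by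
  rw [EisensteinSeries.norm_eq_max_natAbs]
  simp only [Matrix.cons_val_zero, Matrix.cons_val_one, Matrix.head_cons]
  push_cast [Nat.cast_natAbs]
  rfl

lemma abs_helper {x : ℝ} (m : ℤ) (hb : ∀ y : ℝ, y = |x - (m:ℝ)| → max |(m:ℝ)| 1 ≤ 3 * y) :
    max |(m : ℝ)| 1 ≤ 3 * |x - (m : ℝ)| := hb _ rfl

lemma h13bound : ∀ m : ℤ, max |(m : ℝ)| 1 ≤ 3 * |1/3 - (m : ℝ)| := by
  intro m
  have habs : |(m:ℝ)| ≤ 3 * |1/3 - (m:ℝ)| ∧ 1 ≤ 3 * |1/3 - (m:ℝ)| := by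
    rcases le_or_gt m 0 with h | h
    · have hm : (m : ℝ) ≤ 0 := by exact_mod_cast h
      rw [_root_.abs_of_nonpos hm, _root_.abs_of_nonneg (by linarith : (0:ℝ) ≤ 1/3 - m)]
      constructor <;> linarith
    · have hm : (1 : ℝ) ≤ (m : ℝ) := by exact_mod_cast h
      rw [_root_.abs_of_nonneg (by linarith : (0:ℝ) ≤ (m:ℝ)),
        _root_.abs_of_nonpos (by linarith : 1/3 - (m:ℝ) ≤ 0)]
      constructor <;> linarith
  exact max_le habs.1 habs.2

lemma h43bound : ∀ m : ℤ, max |(m : ℝ)| 1 ≤ 3 * |4/3 - (m : ℝ)| := by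
  intro m
  have habs : |(m:ℝ)| ≤ 3 * |4/3 - (m:ℝ)| ∧ 1 ≤ 3 * |4/3 - (m:ℝ)| := by
    rcases le_or_gt m 1 with h | h
    · have hm : (m : ℝ) ≤ 1 := by exact_mod_cast h
      rw [_root_.abs_of_nonneg (by linarith : (0:ℝ) ≤ 4/3 - m)]
      constructor
      · rcases le_or_gt (m : ℝ) 0 with h0 | h0
        · rw [_root_.abs_of_nonpos h0]; linarith
        · rw [_root_.abs_of_nonneg h0.le]; linarith
      · linarith
    · have hm : (2 : ℝ) ≤ (m : ℝ) := by exact_mod_cast h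
      rw [_root_.abs_of_nonneg (by linarith : (0:ℝ) ≤ (m:ℝ)),
        _root_.abs_of_nonpos (by linarith : 4/3 - (m:ℝ) ≤ 0)]
      constructor <;> linarith
  exact max_le habs.1 habs.2

end S17aux
namespace S17aux

lemma diff_wZeta_aff {α β : ℝ}
    (hα : ∀ m : ℤ, max |(m : ℝ)| 1 ≤ 3 * |α - (m : ℝ)|)
    (hβ : ∀ n : ℤ, max |(n : ℝ)| 1 ≤ 3 * |β - (n : ℝ)|) :
    DifferentiableOn ℂ (fun w => wZeta w 1 ((α : ℂ) * w + (β : ℂ))) Om := by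
  have hαm : ∀ m : ℤ, α - (m : ℝ) ≠ 0 := by
    intro m hc
    have h1 := hα m
    rw [hc] at h1
    simp only [abs_zero, mul_zero] at h1
    have := le_max_right |(m : ℝ)| 1
    linarith
  have hα0 : α ≠ 0 := by
    have := hαm 0
    simpa using this
  set T : {p : ℤ × ℤ // p ≠ 0} → ℂ → ℂ := fun p w =>
    1 / ((α : ℂ) * w + (β : ℂ) - ((p.1.1 : ℂ) * w + (p.1.2 : ℂ)))
      + 1 / ((p.1.1 : ℂ) * w + (p.1.2 : ℂ))
      + ((α : ℂ) * w + (β : ℂ)) / ((p.1.1 : ℂ) * w + (p.1.2 : ℂ)) ^ 2 with hT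
  have hden1 : ∀ w ∈ Om, ∀ p : {p : ℤ × ℤ // p ≠ 0}, ((p.1.1 : ℂ) * w + (p.1.2 : ℂ)) ≠ 0 :=
    fun w hw p => int_lin_ne_zero (ne_of_gt hw) p.2
  have hdiffeq : ∀ (w : ℂ) (m n : ℤ), (α : ℂ) * w + (β : ℂ) - ((m : ℂ) * w + (n : ℂ))
      = ((α - (m : ℝ) : ℝ) : ℂ) * w + ((β - (n : ℝ) : ℝ) : ℂ) := by
    intro w m n
    push_cast
    ring
  have hden2 : ∀ w ∈ Om, ∀ p : {p : ℤ × ℤ // p ≠ 0},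
      ((α : ℂ) * w + (β : ℂ) - ((p.1.1 : ℂ) * w + (p.1.2 : ℂ))) ≠ 0 := by
    intro w hw p
    rw [hdiffeq]
    exact real_lin_ne_zero (ne_of_gt hw) (Or.inl (hαm p.1.1))
  have hlin : ∀ (c d : ℂ), Differentiable ℂ (fun w : ℂ => c * w + d) :=
    fun c d => (differentiable_id.const_mul c).add_const d
  have hdiff_tsum : DifferentiableOn ℂ (fun w => ∑' p, T p w) Om := by
    refine TendstoLocallyUniformlyOn.differentiableOn
      (F := fun (t : Finset {p : ℤ × ℤ // p ≠ 0}) (w : ℂ) => ∑ p ∈ t, T p w)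
      (φ := atTop) ?_ ?_ isOpen_Om
    · -- locally uniform convergence
      rw [tendstoLocallyUniformlyOn_iff_forall_isCompact isOpen_Om]
      intro K hKOm hK
      rcases K.eq_empty_or_nonempty with rfl | hne
      · exact tendstoUniformlyOn_empty
      obtain ⟨R, hR⟩ := isBounded_iff_forall_norm_le.1 hK.isBounded
      obtain ⟨B, hBpos, hB⟩ : ∃ B : ℝ, 0 < B ∧ ∀ w ∈ K, B ≤ w.im := by
        obtain ⟨w₀, hw₀K, hw₀min⟩ := hK.exists_isMinOn hne Complex.continuous_im.continuousOn
        exact ⟨w₀.im, hKOm hw₀K, fun w hw => hw₀min hw⟩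
      set z₁ : ℍ := ⟨⟨R, B⟩, hBpos⟩ with hz₁
      set r₀ := EisensteinSeries.r z₁ with hr₀def
      have hr₀ : 0 < r₀ := EisensteinSeries.r_pos z₁
      have hrK : ∀ w, (hw : w ∈ K) → r₀ ≤ EisensteinSeries.r ⟨w, hKOm hw⟩ := by
        intro w hw
        exact EisensteinSeries.r_lower_bound_on_verticalStrip _ hBpos
          ⟨(Complex.abs_re_le_norm w).trans (hR w hw), hB w hw⟩
      set Cz : ℝ := |α| * R + |β| + 1 with hCzdef
      have hCz0 : 0 < Cz := by
        have h1 : (0:ℝ) ≤ |α| * R := mul_nonneg (abs_nonneg _)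
          ((norm_nonneg _).trans (hR _ hne.choose_spec))
        have h2 : (0:ℝ) ≤ |β| := abs_nonneg _
        linarith
      have hCz : ∀ w ∈ K, ‖(α : ℂ) * w + (β : ℂ)‖ ≤ Cz := by
        intro w hw
        calc ‖(α : ℂ) * w + (β : ℂ)‖
            ≤ ‖(α : ℂ) * w‖ + ‖(β : ℂ)‖ := norm_add_le _ _
          _ = |α| * ‖w‖ + |β| := by
              rw [norm_mul, Complex.norm_real, Complex.norm_real, Real.norm_eq_abs, Real.norm_eq_abs]
          _ ≤ |α| * R + |β| := by
              have h3 : ‖w‖ ≤ R := hR w hw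
              nlinarith [abs_nonneg α]
          _ ≤ Cz := by rw [hCzdef]; linarith
      set C : ℝ := 3 * Cz ^ 2 / r₀ ^ 3 with hCdef
      apply tendstoUniformlyOn_tsum (summable_u.mul_left C)
      rintro p w hw
      set m := p.1.1 with hm
      set n := p.1.2 with hn
      set M : ℝ := max |(m : ℝ)| |(n : ℝ)| with hMdef
      have hMnorm : ‖(![m, n] : Fin 2 → ℤ)‖ = M := norm_pair m n
      have hM1 : 1 ≤ M := by
        have h1 : m ≠ 0 ∨ n ≠ 0 := by
          by_contra hc
          push_neg at hc
          exact p.2 (Prod.ext hc.1 hc.2)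
        rcases h1 with h1 | h1
        · have h2 : (1 : ℝ) ≤ |(m : ℝ)| := by
            rw [← Int.cast_abs]
            exact_mod_cast Int.one_le_abs h1
          exact h2.trans (le_max_left _ _)
        · have h2 : (1 : ℝ) ≤ |(n : ℝ)| := by
            rw [← Int.cast_abs]
            exact_mod_cast Int.one_le_abs h1
          exact h2.trans (le_max_right _ _)
      have hM0 : 0 < M := lt_of_lt_of_le one_pos hM1
      set τ' : ℍ := ⟨w, hKOm hw⟩ with hτ'
      have hxne : (![m, n] : Fin 2 → ℤ) ≠ 0 := by
        intro hc
        apply p.2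
        have h0 := congrFun hc 0
        have h1 := congrFun hc 1
        simp at h0 h1
        exact Prod.ext h0 h1
      have hw_lb : r₀ * M ≤ ‖(m : ℂ) * w + (n : ℂ)‖ := by
        have h1 := EisensteinSeries.r_mul_max_le τ' hxne
        simp only [Matrix.cons_val_zero, Matrix.cons_val_one, Matrix.head_cons] at h1
        rw [hMnorm] at h1
        calc r₀ * M ≤ EisensteinSeries.r τ' * M :=
              mul_le_mul_of_nonneg_right (hrK w hw) hM0.le
          _ ≤ _ := h1
      have hd_lb : r₀ * (M / 3)
          ≤ ‖(α : ℂ) * w + (β : ℂ) - ((m : ℂ) * w + (n : ℂ))‖ := by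
        rw [hdiffeq]
        have h1 := r_mul_max_le_real τ' (c := α - (m:ℝ)) (d := β - (n:ℝ)) (Or.inl (hαm m))
        have h2 : M / 3 ≤ max |α - (m:ℝ)| |β - (n:ℝ)| := by
          have ha := (le_max_left |(m:ℝ)| 1).trans (hα m)
          have hb := (le_max_left |(n:ℝ)| 1).trans (hβ n)
          have h3a : 3 * |α - (m:ℝ)| ≤ 3 * max |α - (m:ℝ)| |β - (n:ℝ)| := by
            have := le_max_left |α - (m:ℝ)| |β - (n:ℝ)|
            linarith
          have h3b : 3 * |β - (n:ℝ)| ≤ 3 * max |α - (m:ℝ)| |β - (n:ℝ)| := by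
            have := le_max_right |α - (m:ℝ)| |β - (n:ℝ)|
            linarith
          have h4 : M ≤ 3 * max |α - (m:ℝ)| |β - (n:ℝ)| :=
            max_le (ha.trans h3a) (hb.trans h3b)
          linarith
        calc r₀ * (M / 3) ≤ EisensteinSeries.r τ' * max |α - (m:ℝ)| |β - (n:ℝ)| := by
              apply mul_le_mul (hrK w hw) h2 (by positivity) (EisensteinSeries.r_pos τ').le
          _ ≤ _ := h1
      have hv := hden1 w (hKOm hw) p
      have hd := hden2 w (hKOm hw) p
      have hTval : T p w = ((α:ℂ) * w + (β:ℂ)) ^ 2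
          / (((α:ℂ) * w + (β:ℂ) - ((m:ℂ) * w + (n:ℂ))) * ((m:ℂ) * w + (n:ℂ)) ^ 2) := by
        rw [hT]
        have hv' : (m:ℂ) * w + (n:ℂ) ≠ 0 := hv
        have hd' : (α:ℂ) * w + (β:ℂ) - ((m:ℂ) * w + (n:ℂ)) ≠ 0 := hd
        show 1 / ((α:ℂ) * w + (β:ℂ) - ((m:ℂ) * w + (n:ℂ))) + 1 / ((m:ℂ) * w + (n:ℂ))
          + ((α:ℂ) * w + (β:ℂ)) / ((m:ℂ) * w + (n:ℂ)) ^ 2 = _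
        rw [div_add_div _ _ hd' hv', div_add_div _ _ (mul_ne_zero hd' hv') (pow_ne_zero 2 hv'),
          div_eq_div_iff (mul_ne_zero (mul_ne_zero hd' hv') (pow_ne_zero 2 hv'))
            (mul_ne_zero hd' (pow_ne_zero 2 hv'))]
        ring
      rw [hTval, norm_div, norm_pow, norm_mul, norm_pow, hMnorm]
      have hpow : M ^ (-3 : ℝ) = (M ^ 3)⁻¹ := by
        rw [show (-3 : ℝ) = -((3:ℕ) : ℝ) by norm_num, Real.rpow_neg hM0.le, Real.rpow_natCast]
      rw [hpow]
      have habsz := hCz w hw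
      have h2 : (r₀ * M) ^ 2 ≤ ‖(m:ℂ) * w + (n:ℂ)‖ ^ 2 :=
        pow_le_pow_left₀ (by positivity) hw_lb 2
      have h3 : (r₀ * (M / 3)) * (r₀ * M) ^ 2
          ≤ ‖(α:ℂ) * w + (β:ℂ) - ((m:ℂ) * w + (n:ℂ))‖
            * ‖(m:ℂ) * w + (n:ℂ)‖ ^ 2 :=
        mul_le_mul hd_lb h2 (by positivity) ((by positivity : (0:ℝ) ≤ r₀ * (M/3)).trans hd_lb)
      calc ‖(α:ℂ) * w + (β:ℂ)‖ ^ 2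
            / (‖(α:ℂ) * w + (β:ℂ) - ((m:ℂ) * w + (n:ℂ))‖
              * ‖(m:ℂ) * w + (n:ℂ)‖ ^ 2)
          ≤ Cz ^ 2 / ((r₀ * (M / 3)) * (r₀ * M) ^ 2) := by
            apply div_le_div₀ (by positivity) (pow_le_pow_left₀ (norm_nonneg _) habsz 2)
              (by positivity) h3
        _ = C * (M ^ 3)⁻¹ := by
            rw [hCdef]
            field_simp
    · -- differentiability of partial sums
      filter_upwards with t
      apply DifferentiableOn.fun_sum
      intro p _
      apply DifferentiableOn.add
      · apply DifferentiableOn.add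
        · exact (differentiableOn_const _).div
            ((hlin _ _).differentiableOn.sub (hlin _ _).differentiableOn)
            (fun w hw => hden2 w hw p)
        · exact (differentiableOn_const _).div (hlin _ _).differentiableOn
            (fun w hw => hden1 w hw p)
      · exact (hlin _ _).differentiableOn.div ((hlin _ _).differentiableOn.pow 2)
          (fun w hw => pow_ne_zero 2 (hden1 w hw p))
  have hfirst : DifferentiableOn ℂ (fun w : ℂ => 1 / ((α:ℂ) * w + (β:ℂ))) Om :=
    (differentiableOn_const _).div (hlin _ _).differentiableOn
      (fun w hw => real_lin_ne_zero (ne_of_gt hw) (Or.inl hα0))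
  refine (hfirst.add hdiff_tsum).congr ?_
  intro w hw
  exact wZeta_eq w (ne_of_gt hw) _

end S17aux
namespace S17aux

lemma diff_etaA : DifferentiableOn ℂ (fun w => wEtaP w 1 w) Om := by
  have h1 := diff_wZeta_aff h43bound h13bound
  have h2 := diff_wZeta_aff h13bound h13bound
  refine (h1.sub h2).congr ?_
  intro w hw
  unfold wEtaP
  rw [show (w + 1) / 3 + w = ((4/3 : ℝ) : ℂ) * w + ((1/3 : ℝ) : ℂ) by push_cast; ring,
    show (w + 1) / 3 = ((1/3 : ℝ) : ℂ) * w + ((1/3 : ℝ) : ℂ) by push_cast; ring]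
  rfl

lemma diff_etaB : DifferentiableOn ℂ (fun w => wEtaP w 1 1) Om := by
  have h1 := diff_wZeta_aff h13bound h43bound
  have h2 := diff_wZeta_aff h13bound h13bound
  refine (h1.sub h2).congr ?_
  intro w hw
  unfold wEtaP
  rw [show (w + 1) / 3 + 1 = ((1/3 : ℝ) : ℂ) * w + ((4/3 : ℝ) : ℂ) by push_cast; ring,
    show (w + 1) / 3 = ((1/3 : ℝ) : ℂ) * w + ((1/3 : ℝ) : ℂ) by push_cast; ring]
  rfl

lemma diff_comp {φ : ℍ → ℂ → ℂ} (hφ : MJHolo φ) (a b : ℝ) :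
    DifferentiableOn ℂ
      (fun w => if h : 0 < w.im then φ ⟨w, h⟩ ((a : ℂ) * w + (b : ℂ)) else 0) Om := by
  have hg : Differentiable ℂ (fun w : ℂ => (w, (a : ℂ) * w + (b : ℂ))) :=
    differentiable_id.prodMk ((differentiable_id.const_mul _).add_const _)
  have hmap : Set.MapsTo (fun w : ℂ => (w, (a : ℂ) * w + (b : ℂ))) Om
      {p : ℂ × ℂ | 0 < p.1.im} := fun w hw => hw
  exact hφ.comp hg.differentiableOn hmap

/-- The function τ ↦ (φ |'' X)(τ, 0), extended by 0 to all of ℂ. -/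
def sl (k : ℤ) (φ : ℍ → ℂ → ℂ) (v : Fin 2 → ℝ) : ℂ → ℂ := fun w =>
  if h : 0 < w.im then slash2 k φ v ⟨w, h⟩ 0 else 0

lemma diff_sl (k : ℤ) {φ : ℍ → ℂ → ℂ} (hφ : MJHolo φ) (v : Fin 2 → ℝ) :
    DifferentiableOn ℂ (sl k φ v) Om := by
  set a := v 0 with ha
  set b := v 1 with hb
  have hmain : DifferentiableOn ℂ
      (fun w => psiV a b ^ k
        * Complex.exp ((k : ℂ) * (((a : ℂ) * wEtaP w 1 w + (b : ℂ) * wEtaP w 1 1)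
            * (0 + ((a : ℂ) * w + (b : ℂ)) / 2)))
        * (if h : 0 < w.im then φ ⟨w, h⟩ ((a : ℂ) * w + (b : ℂ)) else 0)) Om := by
    apply DifferentiableOn.mul _ (diff_comp hφ a b)
    apply DifferentiableOn.const_mul
    apply DifferentiableOn.cexp
    apply DifferentiableOn.const_mul
    apply DifferentiableOn.mul
    · exact (diff_etaA.const_mul _).add (diff_etaB.const_mul _)
    · apply DifferentiableOn.add (differentiableOn_const _)
      exact (((differentiable_id.const_mul _).add_const _).differentiableOn).div_const _
  refine hmain.congr ?_
  intro w hw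
  have h0 : (0 : ℂ) + (a : ℂ) * w + (b : ℂ) = (a : ℂ) * w + (b : ℂ) := by ring
  have hw' : 0 < w.im := hw
  simp only [sl, dif_pos hw', slash2, wEta, UpperHalfPlane.coe_mk_subtype hw', ← ha, ← hb]
  rw [mul_zpow, ← Complex.exp_int_mul, h0]

end S17aux
namespace S17aux

lemma psiV_sq (l μ : ℝ) : psiV l μ * psiV l μ = 1 := by
  rcases psiV_cases l μ with h | h <;> rw [h] <;> norm_num

lemma step_lemma (k : ℤ) (ψv ψw ψz sv sw sz E P Q : ℂ)
    (hψw : ψw ≠ 0) (hψz : ψz ≠ 0)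
    (hE : (k : ℂ) * sv = E + (k : ℂ) * sw + (k : ℂ) * sz)
    (hz : (ψz * Complex.exp sz) ^ k * P = Q) :
    (ψv * Complex.exp sv) ^ k * P
      = ψv ^ k * ψw ^ (-k) * ψz ^ (-k) * Complex.exp E * ((ψw * Complex.exp sw) ^ k * Q) := by
  rw [← hz, mul_zpow, mul_zpow, mul_zpow, ← Complex.exp_int_mul, ← Complex.exp_int_mul,
    ← Complex.exp_int_mul, hE, Complex.exp_add, Complex.exp_add, _root_.zpow_neg, _root_.zpow_neg]
  have h1 : ψw ^ k ≠ 0 := zpow_ne_zero k hψw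
  have h2 : ψz ^ k ≠ 0 := zpow_ne_zero k hψz
  field_simp

lemma step2 (k : ℤ) (ψa ψb ψc sa sb sc L P Q W : ℂ)
    (hψa : ψa * ψa = 1) (hψb : ψb * ψb = 1) (hψc : ψc * ψc = 1)
    (hE : (k : ℂ) * L = 2 * ((k : ℂ) * sa) - (2 * ((k : ℂ) * sb) + 2 * ((k : ℂ) * sc)))
    (e1 : (ψa * Complex.exp sa) ^ k * W = P)
    (e2 : (ψb * Complex.exp sb) ^ k * Q = P)
    (e3 : (ψc * Complex.exp sc) ^ k * W = Q)
    (hP : P ≠ 0) :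
    Complex.exp ((k : ℂ) * L) = 1 := by
  have hW : W ≠ 0 := by
    intro h
    rw [h, mul_zero] at e1
    exact hP e1.symm
  have heq : (ψa * Complex.exp sa) ^ k
      = (ψb * Complex.exp sb) ^ k * (ψc * Complex.exp sc) ^ k := by
    apply mul_right_cancel₀ hW
    rw [e1, mul_assoc, e3, e2]
  have h2 := congrArg (fun x : ℂ => x ^ (2 : ℕ)) heq
  rw [mul_zpow, mul_zpow, mul_zpow, ← Complex.exp_int_mul, ← Complex.exp_int_mul,
    ← Complex.exp_int_mul] at h2
  rw [mul_pow, mul_pow, mul_pow, mul_pow] at h2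
  have ha2 : (ψa ^ k) ^ (2 : ℕ) = 1 := by rw [sq, ← mul_zpow, hψa, _root_.one_zpow]
  have hb2 : (ψb ^ k) ^ (2 : ℕ) = 1 := by rw [sq, ← mul_zpow, hψb, _root_.one_zpow]
  have hc2 : (ψc ^ k) ^ (2 : ℕ) = 1 := by rw [sq, ← mul_zpow, hψc, _root_.one_zpow]
  rw [ha2, hb2, hc2, one_mul, one_mul, one_mul, ← Complex.exp_nat_mul, ← Complex.exp_nat_mul,
    ← Complex.exp_nat_mul, ← Complex.exp_add] at h2
  rw [show (k : ℂ) * L = ((2 : ℕ) : ℂ) * ((k : ℂ) * sa)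
      - (((2 : ℕ) : ℂ) * ((k : ℂ) * sb) + ((2 : ℕ) : ℂ) * ((k : ℂ) * sc)) by
    push_cast
    linear_combination hE]
  rw [Complex.exp_sub, h2, div_self (Complex.exp_ne_zero _)]

end S17aux
namespace S17aux

lemma identityII (k : ℤ) (φ : ℍ → ℂ → ℂ)
    (hinv : ∀ Z : Fin 2 → ℤ, slash2 k φ (fun i => ((Z i) : ℝ)) = φ)
    (τ : ℍ) (z : ℂ) (hz : φ τ z ≠ 0) :
    Complex.exp ((k : ℂ) * (wEtaP (τ : ℂ) 1 (τ : ℂ) - wEtaP (τ : ℂ) 1 1 * (τ : ℂ))) = 1 := by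
  have e1 := congrFun (congrFun (hinv ![1, 1]) τ) z
  have e2 := congrFun (congrFun (hinv ![1, 0]) τ) z
  have e3 := congrFun (congrFun (hinv ![0, 1]) τ) (z + (τ : ℂ))
  simp only [slash2, Matrix.cons_val_zero, Matrix.cons_val_one, Matrix.head_cons, wEta] at e1 e2 e3
  push_cast at e1 e2 e3
  rw [show z + 1 * (τ : ℂ) + 1 = z + (τ : ℂ) + 1 by ring] at e1
  rw [show z + 1 * (τ : ℂ) + 0 = z + (τ : ℂ) by ring] at e2
  rw [show z + (τ : ℂ) + 0 * (τ : ℂ) + 1 = z + (τ : ℂ) + 1 by ring] at e3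
  exact step2 k _ _ _ _ _ _ _ _ _ _ (psiV_sq 1 1) (psiV_sq 1 0) (psiV_sq 0 1) (by ring)
    e1 e2 e3 hz

end S17aux
namespace S17aux

lemma identityI (k : ℤ) (φ : ℍ → ℂ → ℂ)
    (hinv : ∀ Z : Fin 2 → ℤ, slash2 k φ (fun i => ((Z i) : ℝ)) = φ)
    (v w : Fin 2 → ℝ) (m n : ℤ)
    (h0 : v 0 = w 0 + (m : ℝ)) (h1 : v 1 = w 1 + (n : ℝ)) (τ : ℍ) :
    slash2 k φ v τ 0
      = psiV (v 0) (v 1) ^ k * psiV (w 0) (w 1) ^ (-k) * psiV ((m : ℝ)) ((n : ℝ)) ^ (-k)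
        * Complex.exp ((k : ℂ) * (((w 0 : ℝ) : ℂ) * (n : ℂ) - ((w 1 : ℝ) : ℂ) * (m : ℂ))
            * (wEtaP (τ : ℂ) 1 (τ : ℂ) - wEtaP (τ : ℂ) 1 1 * (τ : ℂ)) / 2)
        * slash2 k φ w τ 0 := by
  have hz := congrFun (congrFun (hinv ![m, n]) τ)
    ((0 : ℂ) + ((w 0 : ℝ) : ℂ) * (τ : ℂ) + ((w 1 : ℝ) : ℂ))
  simp only [slash2, Matrix.cons_val_zero, Matrix.cons_val_one, Matrix.head_cons, wEta] at hz ⊢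
  push_cast at hz ⊢
  rw [show (0:ℂ) + ((v 0 : ℝ):ℂ) * (τ:ℂ) + ((v 1 : ℝ):ℂ)
      = 0 + ((w 0 : ℝ):ℂ) * (τ:ℂ) + ((w 1 : ℝ):ℂ) + (m:ℂ) * (τ:ℂ) + (n:ℂ) by
    rw [h0, h1]; push_cast; ring]
  refine step_lemma k _ _ _ _ _ _ _ _ _ (psiV_ne_zero _ _) (psiV_ne_zero _ _) ?_ hz
  rw [h0, h1]
  push_cast
  ring

end S17aux
namespace S17aux

lemma pm_zpow {x : ℂ} (h : x = 1 ∨ x = -1) (j : ℤ) : x ^ j = 1 ∨ x ^ j = -1 := by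
  rcases h with h | h
  · subst h
    left
    exact _root_.one_zpow j
  · subst h
    rcases Int.even_or_odd j with hj | hj
    · left
      exact hj.neg_one_zpow
    · right
      exact hj.neg_one_zpow

lemma pm_mul {x y : ℂ} (hx : x = 1 ∨ x = -1) (hy : y = 1 ∨ y = -1) :
    x * y = 1 ∨ x * y = -1 := by
  rcases hx with h | h <;> rcases hy with h' | h' <;> subst h <;> subst h' <;> norm_num

lemma exp_root (N : ℕ) (hN : 0 < N) (s : ℂ) (hs : Complex.exp s ^ (2 * N) = 1) :
    ∃ j < 2 * N, Complex.exp s = Complex.exp (Real.pi * Complex.I * j / N) := by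
  rw [← Complex.exp_nat_mul, Complex.exp_eq_one_iff] at hs
  obtain ⟨t, ht⟩ := hs
  have hNne : (N : ℂ) ≠ 0 := Nat.cast_ne_zero.2 hN.ne'
  have h2Npos : (0 : ℤ) < 2 * N := by positivity
  have hmod_nonneg : 0 ≤ t % (2 * N : ℤ) := Int.emod_nonneg t h2Npos.ne'
  have hmod_lt : t % (2 * N : ℤ) < (2 * N : ℤ) := Int.emod_lt_of_pos t h2Npos
  set j : ℕ := (t % (2 * N : ℤ)).toNat with hj
  have hjc : ((j : ℕ) : ℤ) = t % (2 * N : ℤ) := Int.toNat_of_nonneg hmod_nonneg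
  refine ⟨j, by omega, ?_⟩
  have hs' : s = (t : ℂ) * (Real.pi * Complex.I) / N := by
    push_cast at ht
    field_simp at ht ⊢
    linear_combination ht
  rw [hs', Complex.exp_eq_exp_iff_exists_int]
  refine ⟨t / (2 * N : ℤ), ?_⟩
  have hdecomp : (2 * N : ℤ) * (t / (2 * N : ℤ)) + t % (2 * N : ℤ) = t :=
    Int.mul_ediv_add_emod t (2 * N)
  have hdc : ((2 * N : ℤ) : ℂ) * ((t / (2 * N : ℤ) : ℤ) : ℂ) + ((t % (2 * N : ℤ) : ℤ) : ℂ)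
      = (t : ℂ) := by exact_mod_cast congrArg (fun x : ℤ => (x : ℂ)) hdecomp
  have hjcc : ((j : ℕ) : ℂ) = ((t % (2 * N : ℤ) : ℤ) : ℂ) := by exact_mod_cast hjc
  rw [hjcc]
  field_simp
  push_cast at hdc ⊢
  linear_combination (-1 : ℂ) * hdc

end S17aux
open S17aux in
/-- if X ≡ Y (mod ℤ²) then φ_X = ξ·φ_Y for some root of unity ξ. -/
theorem statement17 (k : ℤ) (φ : ℍ → ℂ → ℂ)
    (h : IsModifiedJacobiForm k (⊤ : Subgroup SL2Z) φ)
    (X Y : Fin 2 → ℚ) (hXY : ∀ i, ∃ a : ℤ, X i - Y i = (a : ℚ)) :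
    ∃ ξ : ℂ, (∃ n : ℕ, 0 < n ∧ ξ ^ n = 1) ∧
      ∀ τ : ℍ, slash2 k φ (fun i => (X i : ℝ)) τ 0 =
        ξ * slash2 k φ (fun i => (Y i : ℝ)) τ 0 := by
  obtain ⟨hholo, hsl1, hinv, hfour⟩ := h
  choose Z hZ using hXY
  set v : Fin 2 → ℝ := fun i => ((X i : ℚ) : ℝ) with hv
  set w : Fin 2 → ℝ := fun i => ((Y i : ℚ) : ℝ) with hw
  have h0 : v 0 = w 0 + ((Z 0 : ℤ) : ℝ) := by
    have hq0 : X 0 = Y 0 + (Z 0 : ℚ) := by linarith [hZ 0]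
    show ((X 0 : ℚ) : ℝ) = ((Y 0 : ℚ) : ℝ) + ((Z 0 : ℤ) : ℝ)
    rw [hq0]
    push_cast
    ring
  have h1 : v 1 = w 1 + ((Z 1 : ℤ) : ℝ) := by
    have hq1 : X 1 = Y 1 + (Z 1 : ℚ) := by linarith [hZ 1]
    show ((X 1 : ℚ) : ℝ) = ((Y 1 : ℚ) : ℝ) + ((Z 1 : ℤ) : ℝ)
    rw [hq1]
    push_cast
    ring
  set q : ℚ := Y 0 * (Z 1 : ℚ) - Y 1 * (Z 0 : ℚ) with hqdef
  set N : ℕ := q.den with hNdef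
  have hNpos : 0 < N := q.pos
  set σ : ℂ := psiV (v 0) (v 1) ^ k * psiV (w 0) (w 1) ^ (-k)
      * psiV ((Z 0 : ℝ)) ((Z 1 : ℝ)) ^ (-k) with hσdef
  have hσpm : σ = 1 ∨ σ = -1 :=
    pm_mul (pm_mul (pm_zpow (psiV_cases _ _) k) (pm_zpow (psiV_cases _ _) (-k)))
      (pm_zpow (psiV_cases _ _) (-k))
  have hqc : ((w 0 : ℝ) : ℂ) * ((Z 1 : ℤ) : ℂ) - ((w 1 : ℝ) : ℂ) * ((Z 0 : ℤ) : ℂ) = (q : ℂ) := by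
    simp only [hqdef, hw]
    push_cast
    ring
  have hI : ∀ τ : ℍ, slash2 k φ v τ 0
      = σ * Complex.exp ((k : ℂ) * (q : ℂ)
          * (wEtaP (τ : ℂ) 1 (τ : ℂ) - wEtaP (τ : ℂ) 1 1 * (τ : ℂ)) / 2) * slash2 k φ w τ 0 := by
    intro τ
    have hIt := identityI k φ hinv v w (Z 0) (Z 1) h0 h1 τ
    rw [hqc] at hIt
    rw [hIt, hσdef]
  have hGzero : ∀ τ : ℍ, φ τ ((0 : ℂ) + ((w 0 : ℝ) : ℂ) * (τ : ℂ) + ((w 1 : ℝ) : ℂ)) = 0 →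
      slash2 k φ w τ 0 = 0 := by
    intro τ hz
    simp only [slash2]
    rw [hz, mul_zero]
  -- the covering property
  have hcov : ∀ x ∈ Om, ∃ j ∈ Finset.range (2 * N),
      sl k φ v x - σ * Complex.exp (Real.pi * Complex.I * j / N) * sl k φ w x = 0 := by
    intro x hx
    have hxim : 0 < x.im := hx
    set τ : ℍ := ⟨x, hxim⟩ with hτ
    have hFx : sl k φ v x = slash2 k φ v τ 0 := dif_pos hxim
    have hGx : sl k φ w x = slash2 k φ w τ 0 := dif_pos hxim
    by_cases hz0 : φ τ ((0 : ℂ) + ((w 0 : ℝ) : ℂ) * (τ : ℂ) + ((w 1 : ℝ) : ℂ)) = 0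
    · refine ⟨0, Finset.mem_range.2 (by positivity), ?_⟩
      rw [hFx, hGx, hI τ, hGzero τ hz0]
      ring
    · have hII := identityII k φ hinv τ _ hz0
      have hNq : (q : ℂ) * (N : ℂ) = (q.num : ℂ) := by
        rw [Rat.cast_def, hNdef]
        have hden : ((q.den : ℕ) : ℂ) ≠ 0 := Nat.cast_ne_zero.2 q.pos.ne'
        field_simp
      have hs2N : Complex.exp ((k : ℂ) * (q : ℂ)
          * (wEtaP (τ : ℂ) 1 (τ : ℂ) - wEtaP (τ : ℂ) 1 1 * (τ : ℂ)) / 2) ^ (2 * N) = 1 := by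
        rw [← Complex.exp_nat_mul]
        rw [show ((2 * N : ℕ) : ℂ) * ((k : ℂ) * (q : ℂ)
              * (wEtaP (τ : ℂ) 1 (τ : ℂ) - wEtaP (τ : ℂ) 1 1 * (τ : ℂ)) / 2)
            = (q.num : ℂ) * ((k : ℂ)
              * (wEtaP (τ : ℂ) 1 (τ : ℂ) - wEtaP (τ : ℂ) 1 1 * (τ : ℂ))) by
          push_cast
          linear_combination ((k : ℂ)
            * (wEtaP (τ : ℂ) 1 (τ : ℂ) - wEtaP (τ : ℂ) 1 1 * (τ : ℂ))) * hNq]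
        rw [Complex.exp_int_mul, hII, _root_.one_zpow]
      obtain ⟨j, hjlt, hjeq⟩ := exp_root N hNpos _ hs2N
      refine ⟨j, Finset.mem_range.2 hjlt, ?_⟩
      rw [hFx, hGx, hI τ, hjeq]
      ring
  -- pigeonhole and the identity theorem
  have hdH : ∀ j : ℕ, DifferentiableOn ℂ
      (fun x => sl k φ v x - σ * Complex.exp (Real.pi * Complex.I * j / N) * sl k φ w x) Om :=
    fun j => (diff_sl k hholo v).sub ((diff_sl k hholo w).const_mul _)
  have hIOm : Complex.I ∈ Om := by simp [Om]
  have hfreq : ∃ j ∈ Finset.range (2 * N), ∃ᶠ x in nhdsWithin Complex.I {Complex.I}ᶜ,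
      sl k φ v x - σ * Complex.exp (Real.pi * Complex.I * j / N) * sl k φ w x = 0 := by
    by_contra hcon
    push_neg at hcon
    have hev : ∀ᶠ x in nhdsWithin Complex.I {Complex.I}ᶜ, ∀ j ∈ Finset.range (2 * N),
        ¬(sl k φ v x - σ * Complex.exp (Real.pi * Complex.I * j / N) * sl k φ w x = 0) := by
      rw [Filter.eventually_all_finset]
      intro j hj
      have hc := hcon j hj
      exact hc
    have hOmev : ∀ᶠ x in nhdsWithin Complex.I {Complex.I}ᶜ, x ∈ Om :=
      eventually_nhdsWithin_of_eventually_nhds (isOpen_Om.eventually_mem hIOm)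
    obtain ⟨x, hx1, hx2⟩ := (hev.and hOmev).exists
    obtain ⟨j, hj, hj0⟩ := hcov x hx2
    exact hx1 j hj hj0
  obtain ⟨j₀, hj₀, hfr⟩ := hfreq
  have hzero := ((hdH j₀).analyticOnNhd isOpen_Om).eqOn_zero_of_preconnected_of_frequently_eq_zero
      preconnected_Om hIOm hfr
  refine ⟨σ * Complex.exp (Real.pi * Complex.I * j₀ / N), ⟨4 * N, by positivity, ?_⟩, ?_⟩
  · have hc2N : Complex.exp (Real.pi * Complex.I * j₀ / N) ^ (2 * N) = 1 := by
      rw [← Complex.exp_nat_mul]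
      have hNne : (N : ℂ) ≠ 0 := Nat.cast_ne_zero.2 hNpos.ne'
      rw [show ((2 * N : ℕ) : ℂ) * (Real.pi * Complex.I * j₀ / N)
          = (j₀ : ℤ) * (2 * Real.pi * Complex.I) by
        push_cast
        field_simp]
      exact Complex.exp_int_mul_two_pi_mul_I j₀
    rw [mul_pow]
    have hσ4 : σ ^ (4 * N) = 1 := by
      rcases hσpm with hσ | hσ
      · rw [hσ, one_pow]
      · rw [hσ, show 4 * N = 2 * (2 * N) by ring, pow_mul]
        norm_num
    have hc4 : Complex.exp (Real.pi * Complex.I * j₀ / N) ^ (4 * N) = 1 := by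
      rw [show 4 * N = (2 * N) * 2 by ring, pow_mul, hc2N, one_pow]
    rw [hσ4, hc4, one_mul]
  · intro τ
    have hx := hzero (show (τ : ℂ) ∈ Om from τ.2)
    simp only [Pi.zero_apply] at hx
    have hFτ : sl k φ v (τ : ℂ) = slash2 k φ v τ 0 := dif_pos τ.2
    have hGτ : sl k φ w (τ : ℂ) = slash2 k φ w τ 0 := dif_pos τ.2
    rw [hFτ, hGτ] at hx
    exact sub_eq_zero.1 hx

end
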